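/- arXiv:2409.08392 — 5 statements merged into one kernel-verified Lean document; each statement's English description precedes it below -/
import Mathlib

section
/- Let k be an algebraically closed field of characteristic zero and let F = y1^2*y2 + y2^2*y3 + y3^2*y4 + y4^2*y5 + y5^2*y1 in k[y1,...,y5]. Then the only common zero in k^5 of the five partial derivatives ∂F/∂y1, ..., ∂F/∂y5 is the origin (0,0,0,0,0). Equivalently (by the Jacobian criterion and Euler's relation in characteristic zero), the Klein cubic threefold {F = 0} in P^4 is smooth. -/
open MvPolynomial

/-- Auxiliary: for the cyclic system of partial-derivative equations, if one coordinate
vanishes then the remaining four vanish as well. -/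
lemma klein_aux {k : Type*} [Field k] (a b c d e : k)
    (h0 : 2 * a * b + e ^ 2 = 0) (h2 : b ^ 2 + 2 * c * d = 0)
    (h3 : c ^ 2 + 2 * d * e = 0) (h4 : d ^ 2 + 2 * e * a = 0) (ha : a = 0) :
    b = 0 ∧ c = 0 ∧ d = 0 ∧ e = 0 := by
  subst ha
  have he : e = 0 := by
    have : e ^ 2 = 0 := by linear_combination h0
    exact pow_eq_zero_iff two_ne_zero |>.mp this
  subst he
  have hd : d = 0 := by
    have : d ^ 2 = 0 := by linear_combination h4
    exact pow_eq_zero_iff two_ne_zero |>.mp this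
  subst hd
  have hc : c = 0 := by
    have : c ^ 2 = 0 := by linear_combination h3
    exact pow_eq_zero_iff two_ne_zero |>.mp this
  subst hc
  have hb : b = 0 := by
    have : b ^ 2 = 0 := by linear_combination h2
    exact pow_eq_zero_iff two_ne_zero |>.mp this
  exact ⟨hb, rfl, rfl, rfl⟩

/-- The Klein cubic threefold `{y₁²y₂ + y₂²y₃ + y₃²y₄ + y₄²y₅ + y₅²y₁ = 0} ⊂ ℙ⁴` is smooth:
over an algebraically closed field of characteristic zero, the only common zero in `k⁵` of the
five partial derivatives of `F = y₁²y₂ + y₂²y₃ + y₃²y₄ + y₄²y₅ + y₅²y₁` is the origin. -/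
theorem klein_cubic_smooth (k : Type*) [Field k] [IsAlgClosed k] [CharZero k]
    (F : MvPolynomial (Fin 5) k)
    (hF : F = X 0 ^ 2 * X 1 + X 1 ^ 2 * X 2 + X 2 ^ 2 * X 3 + X 3 ^ 2 * X 4 + X 4 ^ 2 * X 0)
    (y : Fin 5 → k)
    (hy : ∀ i : Fin 5, eval y (pderiv i F) = 0) :
    y = 0 := by
  have h0 := hy 0
  have h1 := hy 1
  have h2 := hy 2
  have h3 := hy 3
  have h4 := hy 4
  rw [hF] at h0 h1 h2 h3 h4
  simp only [pderiv_mul, pderiv_pow, pderiv_X, map_add] at h0 h1 h2 h3 h4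
  simp [pderiv_mul, pderiv_pow, pderiv_X] at h0 h1 h2 h3 h4
  set a := y 0 with hya
  set b := y 1 with hyb
  set c := y 2 with hyc
  set d := y 3 with hyd
  set e := y 4 with hye
  -- the five equations
  have E0 : 2 * a * b + e ^ 2 = 0 := by linear_combination h0
  have E1 : 2 * b * c + a ^ 2 = 0 := by linear_combination h1
  have E2 : 2 * c * d + b ^ 2 = 0 := by linear_combination h2
  have E3 : 2 * d * e + c ^ 2 = 0 := by linear_combination h3
  have E4 : 2 * e * a + d ^ 2 = 0 := by linear_combination h4
  -- key: 33 * (abcde)^2 = 0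
  have key : (33 : k) * (a * b * c * d * e) ^ 2 = 0 := by
    linear_combination (a^2*b^2*c^2*d^2) * E0 + (16*a^2*b*c*d^2*e^2) * E1
      + (-8*a^4*b*d*e^2) * E2 + (4*a^4*b^3*e) * E3 + (-2*a^3*b^3*c^2) * E4
  have h33 : (33 : k) ≠ 0 := by norm_num
  have hP : a * b * c * d * e = 0 :=
    pow_eq_zero_iff two_ne_zero |>.mp ((mul_eq_zero.mp key).resolve_left h33)
  have hall : a = 0 ∧ b = 0 ∧ c = 0 ∧ d = 0 ∧ e = 0 := by
    rcases mul_eq_zero.mp hP with h | he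
    · rcases mul_eq_zero.mp h with h | hd
      · rcases mul_eq_zero.mp h with h | hc
        · rcases mul_eq_zero.mp h with ha | hb
          · obtain ⟨x1, x2, x3, x4⟩ := klein_aux a b c d e
              (by linear_combination E0) (by linear_combination E2)
              (by linear_combination E3) (by linear_combination E4) ha
            exact ⟨ha, x1, x2, x3, x4⟩
          · obtain ⟨x1, x2, x3, x4⟩ := klein_aux b c d e a
              (by linear_combination E1) (by linear_combination E3)
              (by linear_combination E4) (by linear_combination E0) hb
            exact ⟨x4, hb, x1, x2, x3⟩
        · obtain ⟨x1, x2, x3, x4⟩ := klein_aux c d e a b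
            (by linear_combination E2) (by linear_combination E4)
            (by linear_combination E0) (by linear_combination E1) hc
          exact ⟨x3, x4, hc, x1, x2⟩
      · obtain ⟨x1, x2, x3, x4⟩ := klein_aux d e a b c
          (by linear_combination E3) (by linear_combination E0)
          (by linear_combination E1) (by linear_combination E2) hd
        exact ⟨x2, x3, x4, hd, x1⟩
    · obtain ⟨x1, x2, x3, x4⟩ := klein_aux e a b c d
        (by linear_combination E4) (by linear_combination E1)
        (by linear_combination E2) (by linear_combination E3) he
      exact ⟨x1, x2, x3, x4, he⟩
  obtain ⟨ha, hb, hc, hd, he⟩ := hall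
  funext i
  fin_cases i
  · exact ha
  · exact hb
  · exact hc
  · exact hd
  · exact he
end

section
/- Let k be an algebraically closed field of characteristic zero and let g = y3^3 + 3*y3^2*y5 + 45*y3*y4^2 + 10*y4^3 + y5^3 in k[y3, y4, y5]. Then the only common zero in k^3 of the three partial derivatives ∂g/∂y3, ∂g/∂y4, ∂g/∂y5 is the origin. Equivalently, the plane cubic curve {g = 0} in P^2 is smooth. -/
open MvPolynomial

/-- The plane cubic curve `{g = 0} ⊂ ℙ²` with
`g = y₃³ + 3y₃²y₅ + 45y₃y₄² + 10y₄³ + y₅³` (variables `y 0, y 1, y 2` standing for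
`y₃, y₄, y₅`) is smooth: over an algebraically closed field of characteristic zero, the only
common zero in `k³` of the three partial derivatives of `g` is the origin. -/
theorem plane_cubic_smooth (k : Type*) [Field k] [IsAlgClosed k] [CharZero k]
    (g : MvPolynomial (Fin 3) k)
    (hg : g = X 0 ^ 3 + 3 * X 0 ^ 2 * X 2 + 45 * X 0 * X 1 ^ 2 + 10 * X 1 ^ 3 + X 2 ^ 3)
    (y : Fin 3 → k)
    (hy : ∀ i : Fin 3, eval y (pderiv i g) = 0) :
    y = 0 := by
  rw [show (3 : MvPolynomial (Fin 3) k) = C 3 from (map_ofNat C 3).symm,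
    show (45 : MvPolynomial (Fin 3) k) = C 45 from (map_ofNat C 45).symm,
    show (10 : MvPolynomial (Fin 3) k) = C 10 from (map_ofNat C 10).symm] at hg
  have h0 := hy 0
  have h1 := hy 1
  have h2 := hy 2
  simp [hg, pderiv_X, pderiv_C, Derivation.leibniz, Derivation.leibniz_pow] at h0 h1 h2
  -- h0 : 3 * y 0 ^ 2 + y 2 * (3 * (2 * y 0)) + y 1 ^ 2 * 45 = 0
  -- h1 : 45 * y 0 * (2 * y 1) + 10 * (3 * y 1 ^ 2) = 0
  -- h2 : 3 * y 0 ^ 2 + 3 * y 2 ^ 2 = 0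
  have ha2 : y 0 ^ 2 + y 2 ^ 2 = 0 := by linear_combination h2 / 3
  have hb : y 1 * (3 * y 0 + y 1) = 0 := by linear_combination h1 / 30
  have key : y 0 = 0 ∧ y 1 = 0 ∧ y 2 = 0 := by
    rcases mul_eq_zero.mp hb with hb0 | hb1
    · have hac : y 0 * (y 0 + 2 * y 2) = 0 := by
        linear_combination h0 / 3 - 15 * y 1 * hb0
      rcases mul_eq_zero.mp hac with ha | hc
      · have : y 2 ^ 2 = 0 := by linear_combination ha2 - y 0 * ha
        exact ⟨ha, hb0, pow_eq_zero_iff two_ne_zero |>.mp this⟩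
      · have h5 : (5 : k) * y 2 ^ 2 = 0 := by
          linear_combination ha2 - (y 0 - 2 * y 2) * hc
        have hc2 : y 2 = 0 := by
          rcases mul_eq_zero.mp h5 with h | h
          · exact absurd h (by norm_num)
          · exact pow_eq_zero_iff two_ne_zero |>.mp h
        exact ⟨by linear_combination hc - 2 * hc2, hb0, hc2⟩
    · have hac : y 0 * (68 * y 0 + y 2) = 0 := by
        linear_combination h0 / 6 - (15 / 2) * (y 1 - 3 * y 0) * hb1
      rcases mul_eq_zero.mp hac with ha | hc
      · have hc2 : y 2 = 0 := by
          have : y 2 ^ 2 = 0 := by linear_combination ha2 - y 0 * ha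
          exact pow_eq_zero_iff two_ne_zero |>.mp this
        exact ⟨ha, by linear_combination hb1 - 3 * ha, hc2⟩
      · have h4625 : (4625 : k) * y 0 ^ 2 = 0 := by
          linear_combination ha2 - (y 2 - 68 * y 0) * hc
        have ha : y 0 = 0 := by
          rcases mul_eq_zero.mp h4625 with h | h
          · exact absurd h (by norm_num)
          · exact pow_eq_zero_iff two_ne_zero |>.mp h
        exact ⟨ha, by linear_combination hb1 - 3 * ha, by linear_combination hc - 68 * ha⟩
  funext i
  fin_cases i <;> simp [key.1, key.2.1, key.2.2]
end

section
/- Let k be an algebraically closed field and W a 4-dimensional k-vector space. Then every 2-dimensional linear subspace of the space of alternating bilinear forms on W contains a nonzero degenerate form, i.e., a nonzero alternating form with nonzero radical. -/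
/-!
Choose bases and write the pencil as `a • A + b • B` with `A`, `B` the Gram matrices of two basis
forms. If `det A = 0` we are done; otherwise `t ↦ det (t • A + B)` is a polynomial of degree
`dim W ≥ 1` (the zero space carries no nonzero forms) with leading coefficient `det A`, so it has
a root over the algebraically closed field, and the form at that root is degenerate.
-/

open Polynomial

namespace Matrix

variable {n : Type*} [Fintype n] [DecidableEq n]

theorem eval_det_X_smul_add_C {R : Type*} [CommRing R] (A B : Matrix n n R) (t : R) :
    eval t (det ((X : R[X]) • A.map C + B.map C)) = det (t • A + B) := by
  rw [← coe_evalRingHom, RingHom.map_det]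
  congr 1
  ext i j
  simp only [RingHom.mapMatrix_apply, map_apply, add_apply, smul_apply, smul_eq_mul,
    coe_evalRingHom, eval_add, eval_mul, eval_C, eval_X]

theorem exists_det_smul_add_smul_eq_zero {k : Type*} [Field k] [IsAlgClosed k] [Nonempty n]
    (A B : Matrix n n k) : ∃ a b : k, (a, b) ≠ 0 ∧ det (a • A + b • B) = 0 := by
  by_cases hA : det A = 0
  · exact ⟨1, 0, by simp, by simpa using hA⟩
  set p : k[X] := det ((X : k[X]) • A.map C + B.map C)
  have hp : p.natDegree = Fintype.card n :=
    le_antisymm (natDegree_det_X_add_C_le A B)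
      (le_natDegree_of_ne_zero (by rwa [coeff_det_X_add_C_card]))
  obtain ⟨t, ht⟩ := IsAlgClosed.exists_root p
    (degree_ne_of_natDegree_ne (hp ▸ Fintype.card_ne_zero))
  exact ⟨t, 1, by simp, by rwa [one_smul, ← eval_det_X_smul_add_C]⟩

end Matrix

namespace LinearMap

theorem exists_ker_smul_add_smul_ne_bot {k W : Type*} [Field k] [IsAlgClosed k]
    [AddCommGroup W] [Module k W] [FiniteDimensional k W] [Nontrivial W]
    (ω₁ ω₂ : W →ₗ[k] W →ₗ[k] k) : ∃ a b : k, (a, b) ≠ 0 ∧ ker (a • ω₁ + b • ω₂) ≠ ⊥ := by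
  let e := Module.finBasis k W
  have : Nonempty (Fin (Module.finrank k W)) := ⟨⟨0, Module.finrank_pos⟩⟩
  obtain ⟨a, b, hab, hdet⟩ :=
    Matrix.exists_det_smul_add_smul_eq_zero (toMatrix₂ e e ω₁) (toMatrix₂ e e ω₂)
  refine ⟨a, b, hab, fun hker => ?_⟩
  have hsep := (separatingLeft_iff_det_ne_zero e).mp (separatingLeft_iff_ker_eq_bot.mpr hker)
  rw [map_add, map_smul, map_smul] at hsep
  exact hsep hdet

end LinearMap

theorem pencil_of_skew_forms_contains_degenerate_general
    (k : Type*) [Field k] [IsAlgClosed k]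
    (W : Type*) [AddCommGroup W] [Module k W] [FiniteDimensional k W]
    (L : Submodule k (W →ₗ[k] W →ₗ[k] k))
    (hL : Module.finrank k L = 2) :
    ∃ ω ∈ L, ω ≠ 0 ∧ LinearMap.ker ω ≠ ⊥ := by
  have : Nontrivial W := by
    by_contra hW
    rw [not_nontrivial_iff_subsingleton] at hW
    have := Module.finrank_zero_of_subsingleton (R := k) (M := L)
    omega
  -- instance search does not find this group structure on the iterated hom space
  let : AddCommGroup (W →ₗ[k] W →ₗ[k] k) := LinearMap.addCommGroup
  have : Module.Finite k L := Module.finite_of_finrank_eq_succ hL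
  have : Module.Free k L := Module.Free.of_divisionRing k L
  let e : Module.Basis (Fin 2) k L := Module.finBasisOfFinrankEq k L hL
  obtain ⟨a, b, hab, hker⟩ := LinearMap.exists_ker_smul_add_smul_ne_bot
    (e 0 : W →ₗ[k] W →ₗ[k] k) (e 1)
  refine ⟨a • e 0 + b • e 1, add_mem (L.smul_mem a (e 0).2) (L.smul_mem b (e 1).2), ?_, hker⟩
  have hind : LinearIndependent k ![e 0, e 1] := by
    convert e.linearIndependent
    ext i : 1
    fin_cases i <;> rfl
  intro h
  exact hab (Prod.ext_iff.mpr (LinearIndependent.pair_iff.mp hind a b (Subtype.ext h)))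

/-- Over an algebraically closed field, every pencil (2-dimensional linear subspace) of
alternating bilinear forms on a 4-dimensional vector space `W` contains a nonzero degenerate
form, i.e. a nonzero alternating form with nonzero radical.  (Forms are viewed as linear maps
`W →ₗ W →ₗ k`, so the radical of `ω` is `ker ω`.) -/
theorem pencil_of_skew_forms_contains_degenerate
    (k : Type*) [Field k] [IsAlgClosed k]
    (W : Type*) [AddCommGroup W] [Module k W] [FiniteDimensional k W]
    (hW : Module.finrank k W = 4)
    (L : Submodule k (W →ₗ[k] W →ₗ[k] k))
    (hL : Module.finrank k L = 2)
    (halt : ∀ ω ∈ L, ∀ v : W, ω v v = 0) :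
    ∃ ω ∈ L, ω ≠ 0 ∧ LinearMap.ker ω ≠ ⊥ :=
  pencil_of_skew_forms_contains_degenerate_general k W L hL
end

section
/- Let k be an algebraically closed field of characteristic zero and V a 6-dimensional k-vector space. Let ω₁ and ω₂ be alternating bilinear forms on V, each of rank exactly 4, such that rad(ω₁) = rad(ω₂) as subspaces of V, and suppose that every nonzero form in the linear span of ω₁ and ω₂ has rank at least 4. Then ω₁ and ω₂ are linearly dependent. -/
/-!
Since `ker ω₁ = ker ω₂` and both forms are alternating, `ω₁` and `ω₂`, viewed as maps
`V → V*`, have the same range, namely the annihilator of the common radical. Hence `ω₂`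
induces an endomorphism of `range ω₁`; an eigenvector `ω₁ v` of it, with eigenvalue `c`, gives
`ω₂ v = c • ω₁ v`, so `ω₂ - c • ω₁` vanishes on `v` as well as on the radical. Its radical then
has dimension at least `dim rad ω₁ + 1`, i.e. its rank is at most `3`, so by hypothesis it is `0`.
-/

open LinearMap

namespace LinearMap

variable {K V W : Type*} [Field K] [AddCommGroup V] [Module K V] [AddCommGroup W] [Module K W]

theorem IsRefl.range_eq_dualAnnihilator_ker [FiniteDimensional K V] {B : V →ₗ[K] V →ₗ[K] K}
    (hB : B.IsRefl) : range B = (ker B).dualAnnihilator := by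
  rw [← hB.ker_flip, dualAnnihilator_ker_eq_range_flip, flip_flip]

theorem IsRefl.range_le_range_of_ker_le [FiniteDimensional K V] {B₁ B₂ : V →ₗ[K] V →ₗ[K] K}
    (hB₁ : B₁.IsRefl) (hB₂ : B₂.IsRefl) (h : ker B₁ ≤ ker B₂) : range B₂ ≤ range B₁ := by
  rw [hB₁.range_eq_dualAnnihilator_ker, hB₂.range_eq_dualAnnihilator_ker]
  exact Submodule.dualAnnihilator_anti h

theorem exists_ker_lt_ker_sub_smul [IsAlgClosed K] [FiniteDimensional K V] {f g : V →ₗ[K] W}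
    (hf : f ≠ 0) (hker : ker f ≤ ker g) (hrange : range g ≤ range f) :
    ∃ c : K, ker f < ker (g - c • f) := by
  let g' : V →ₗ[K] range f := g.codRestrict (range f) fun v ↦ hrange (mem_range_self g v)
  obtain ⟨s, hs⟩ := f.rangeRestrict.exists_rightInverse_of_surjective f.range_rangeRestrict
  have : Nontrivial (range f) := Submodule.nontrivial_iff_ne_bot.mpr (range_eq_bot.not.mpr hf)
  obtain ⟨c, hc⟩ := Module.End.exists_eigenvalue (g' ∘ₗ s)
  obtain ⟨w, hw⟩ := hc.exists_hasEigenvector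
  have hfs : f (s w) = w := congrArg Subtype.val (LinearMap.congr_fun hs w)
  have hgs : g (s w) = c • (w : W) := congrArg Subtype.val hw.apply_eq_smul
  refine ⟨c, SetLike.lt_iff_le_and_exists.mpr ⟨fun v hv ↦ ?_, s w, ?_, ?_⟩⟩
  · have hgv : g v = 0 := hker hv
    rw [mem_ker] at hv ⊢
    simp [hv, hgv]
  · simp [mem_ker, hfs, hgs]
  · simpa [mem_ker, hfs] using hw.right

end LinearMap

theorem skew_forms_same_radical_linearly_dependent_general
    (k : Type*) [Field k] [IsAlgClosed k]
    (V : Type*) [AddCommGroup V] [Module k V] [FiniteDimensional k V]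
    (ω₁ ω₂ : V →ₗ[k] V →ₗ[k] k)
    (halt₁ : ∀ v : V, ω₁ v v = 0) (halt₂ : ∀ v : V, ω₂ v v = 0)
    (hrk₁ : Module.finrank k V - Module.finrank k (LinearMap.ker ω₁) = 4)
    (hker : LinearMap.ker ω₁ = LinearMap.ker ω₂)
    (hspan : ∀ c₁ c₂ : k, c₁ • ω₁ + c₂ • ω₂ ≠ 0 →
      4 ≤ Module.finrank k V - Module.finrank k (LinearMap.ker (c₁ • ω₁ + c₂ • ω₂))) :
    ∃ c₁ c₂ : k, (c₁ ≠ 0 ∨ c₂ ≠ 0) ∧ c₁ • ω₁ + c₂ • ω₂ = 0 := by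
  have hω₁ : ω₁ ≠ 0 := by
    rintro rfl
    rw [ker_zero, finrank_top, Nat.sub_self] at hrk₁
    omega
  have hrange := (IsAlt.isRefl halt₁).range_le_range_of_ker_le (IsAlt.isRefl halt₂) hker.le
  obtain ⟨c, hlt⟩ := exists_ker_lt_ker_sub_smul hω₁ hker.le hrange
  have hcomb : (-c) • ω₁ + (1 : k) • ω₂ = ω₂ - c • ω₁ := by module
  refine ⟨-c, 1, Or.inr one_ne_zero, ?_⟩
  by_contra hne
  have hrank := hspan (-c) 1 hne
  rw [hcomb] at hrank
  have := Submodule.finrank_lt_finrank_of_lt hlt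
  have := Submodule.finrank_le (ker (ω₂ - c • ω₁))
  omega

/-- Injectivity of the classifying map `y ↦ ker y` on the Pfaffian cubic: if `ω₁, ω₂` are
alternating bilinear forms of rank exactly 4 on a 6-dimensional vector space `V` over an
algebraically closed field of characteristic zero, with equal radicals, and if every nonzero
form in the span of `ω₁, ω₂` has rank at least 4, then `ω₁` and `ω₂` are linearly dependent.
(Forms are linear maps `V →ₗ V →ₗ k`; the radical of `ω` is `ker ω` and its rank is
`dim V - dim (ker ω)`.) -/
theorem skew_forms_same_radical_linearly_dependent
    (k : Type*) [Field k] [IsAlgClosed k] [CharZero k]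
    (V : Type*) [AddCommGroup V] [Module k V] [FiniteDimensional k V]
    (hV : Module.finrank k V = 6)
    (ω₁ ω₂ : V →ₗ[k] V →ₗ[k] k)
    (halt₁ : ∀ v : V, ω₁ v v = 0) (halt₂ : ∀ v : V, ω₂ v v = 0)
    (hrk₁ : Module.finrank k V - Module.finrank k (LinearMap.ker ω₁) = 4)
    (hrk₂ : Module.finrank k V - Module.finrank k (LinearMap.ker ω₂) = 4)
    (hker : LinearMap.ker ω₁ = LinearMap.ker ω₂)
    (hspan : ∀ c₁ c₂ : k, c₁ • ω₁ + c₂ • ω₂ ≠ 0 →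
      4 ≤ Module.finrank k V - Module.finrank k (LinearMap.ker (c₁ • ω₁ + c₂ • ω₂))) :
    ∃ c₁ c₂ : k, (c₁ ≠ 0 ∨ c₂ ≠ 0) ∧ c₁ • ω₁ + c₂ • ω₂ = 0 :=
  skew_forms_same_radical_linearly_dependent_general k V ω₁ ω₂ halt₁ halt₂ hrk₁ hker hspan
end

section
/- Let k be an algebraically closed field of characteristic zero, V a 6-dimensional k-vector space, A a 5-dimensional k-vector space, and f : A → (alternating bilinear forms on V) a regular A-net, i.e., f is injective linear and rank f(a) ≥ 4 for every nonzero a in A. Then for every v in V the following are equivalent: (i) there exists a nonzero a in A with f(a)(v, w) = 0 for all w in V; (ii) there exists a 2-dimensional subspace L of V with v in L such that f(a)(u, w) = 0 for all a in A and all u, w in L. -/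
set_option maxRecDepth 8000

open Module LinearMap Polynomial Matrix

section Aux

variable {k : Type*} [Field k]
variable {V : Type*} [AddCommGroup V] [Module k V] [FiniteDimensional k V]
variable {A : Type*} [AddCommGroup A] [Module k A] [FiniteDimensional k A]

omit [FiniteDimensional k V] [FiniteDimensional k A] in
/-- Skew symmetry from the alternating property. -/
lemma net_skew (f : A →ₗ[k] V →ₗ[k] V →ₗ[k] k) (halt : ∀ (a : A) (v : V), f a v v = 0)
    (a : A) (x y : V) : f a x y = -(f a y x) := by
  have h := halt a (x + y)
  simp only [map_add, LinearMap.add_apply, halt a x, halt a y] at h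
  linear_combination h

/-- If `v ≠ 0` lies in the radical of some nonzero member of the net,
then `v` lies in a 2-dimensional subspace isotropic for the whole net. -/
lemma net_plane (hV : Module.finrank k V = 6) (hA : Module.finrank k A = 5)
    (f : A →ₗ[k] V →ₗ[k] V →ₗ[k] k) (halt : ∀ (a : A) (v : V), f a v v = 0)
    (v : V) (hv : v ≠ 0) (a₀ : A) (ha₀ : a₀ ≠ 0) (hrad : ∀ w : V, f a₀ v w = 0) :
    ∃ L : Submodule k V, Module.finrank k L = 2 ∧ v ∈ L ∧
      ∀ a : A, ∀ u ∈ L, ∀ w ∈ L, f a u w = 0 := by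
  classical
  set T : A →ₗ[k] (V →ₗ[k] k) := f.flip v with hT
  have ha₀mem : a₀ ∈ LinearMap.ker T := by
    simp only [hT, LinearMap.mem_ker]
    ext w
    exact hrad w
  -- the kernel of T is nonzero
  have hker : 0 < finrank k (LinearMap.ker T) := by
    rw [Module.finrank_pos_iff_exists_ne_zero]
    exact ⟨⟨a₀, ha₀mem⟩, by simp [Subtype.ext_iff, ha₀]⟩
  have hrange : finrank k (LinearMap.range T) ≤ 4 := by
    have h := LinearMap.finrank_range_add_finrank_ker T
    omega
  -- the map S = T.flip
  set S : V →ₗ[k] (A →ₗ[k] k) := T.flip with hS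
  have hSrange : LinearMap.range S ≤ (LinearMap.ker T).dualAnnihilator := by
    rintro φ ⟨u, rfl⟩
    rw [Submodule.mem_dualAnnihilator]
    intro c hc
    have : T c = 0 := hc
    simp [hS, LinearMap.flip_apply, this]
  have hAnn : finrank k ((LinearMap.ker T).dualAnnihilator) ≤ 4 := by
    have h1 : finrank k (A ⧸ LinearMap.ker T) = finrank k (LinearMap.ker T).dualAnnihilator :=
      LinearEquiv.finrank_eq (Subspace.quotEquivAnnihilator _)
    have h2 := Submodule.finrank_quotient_add_finrank (LinearMap.ker T)
    have h3 := LinearMap.finrank_range_add_finrank_ker T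
    omega
  have hSr : finrank k (LinearMap.range S) ≤ 4 :=
    le_trans (Submodule.finrank_mono hSrange) hAnn
  have hSker : 2 ≤ finrank k (LinearMap.ker S) := by
    have h := LinearMap.finrank_range_add_finrank_ker S
    omega
  have hvS : v ∈ LinearMap.ker S := by
    simp only [hS, LinearMap.mem_ker]
    ext c
    simp [hT, halt]
  -- find u in ker S not in span {v}
  obtain ⟨u, huS, huv⟩ : ∃ u ∈ LinearMap.ker S, u ∉ Submodule.span k {v} := by
    by_contra h
    push_neg at h
    have hle : LinearMap.ker S ≤ Submodule.span k {v} := h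
    have := Submodule.finrank_mono hle
    rw [finrank_span_singleton hv] at this
    omega
  have hli : LinearIndependent k ![v, u] := by
    rw [LinearIndependent.pair_iff' hv]
    intro t ht
    exact huv (ht ▸ Submodule.smul_mem _ t (Submodule.mem_span_singleton_self v))
  refine ⟨Submodule.span k (Set.range ![v, u]), ?_, ?_, ?_⟩
  · rw [finrank_span_eq_card hli]
    simp
  · exact Submodule.subset_span ⟨0, rfl⟩
  · intro a
    -- generators are pairwise orthogonal
    have hvu : f a v u = 0 := by
      have h0 : S u = 0 := huS
      have := congrArg (fun φ => φ a) h0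
      simpa [hS, hT] using this
    have huv' : f a u v = 0 := by rw [net_skew f halt, hvu, neg_zero]
    have hgen : ∀ x ∈ Set.range ![v, u], ∀ y ∈ Set.range ![v, u], f a x y = 0 := by
      rintro x ⟨i, rfl⟩ y ⟨j, rfl⟩
      fin_cases i <;> fin_cases j <;> simp [halt, hvu, huv']
    -- extend to the span
    set L := Submodule.span k (Set.range ![v, u]) with hL
    have step1 : ∀ x ∈ Set.range ![v, u], ∀ y ∈ L, f a x y = 0 := by
      intro x hx y hy
      have : L ≤ LinearMap.ker (f a x) := by
        rw [Submodule.span_le]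
        rintro s hs
        exact LinearMap.mem_ker.mpr (hgen x hx s hs)
      exact this hy
    intro x hx y hy
    -- use the map V → Dual L
    set Φ : V →ₗ[k] Module.Dual k L := L.dualRestrict.comp (f a) with hΦ
    have hLΦ : L ≤ LinearMap.ker Φ := by
      rw [Submodule.span_le]
      intro s hs
      rw [SetLike.mem_coe, LinearMap.mem_ker]
      ext ⟨y', hy'⟩
      exact step1 s hs y' hy'
    have hx0 : Φ x = 0 := hLΦ hx
    have := congrArg (fun φ => φ ⟨y, hy⟩) hx0
    simpa [hΦ] using this

/-- Evaluation of the characteristic polynomial. -/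
lemma charpoly_eval' (N : Matrix (Fin 6) (Fin 6) k) (t : k) :
    N.charpoly.eval t = (Matrix.diagonal (fun _ => t) - N).det := by
  rw [Matrix.charpoly, ← Polynomial.coe_evalRingHom, RingHom.map_det]
  congr 1
  ext i j
  by_cases h : i = j
  · subst h
    simp [Matrix.charmatrix_apply_eq, Matrix.map_apply, Matrix.sub_apply,
      Matrix.diagonal_apply_eq]
  · simp [Matrix.charmatrix_apply_ne _ _ _ h, Matrix.map_apply, Matrix.sub_apply,
      Matrix.diagonal_apply_ne _ h]

/-- Over an algebraically closed field, some nonzero member of the net is degenerate. -/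
lemma exists_degenerate [IsAlgClosed k]
    (hV : Module.finrank k V = 6) (hA : Module.finrank k A = 5)
    (f : A →ₗ[k] V →ₗ[k] V →ₗ[k] k) (halt : ∀ (a : A) (v : V), f a v v = 0) :
    ∃ a : A, a ≠ 0 ∧ ∃ u : V, u ≠ 0 ∧ ∀ w : V, f a u w = 0 := by
  classical
  obtain ⟨b⟩ : Nonempty (Basis (Fin 6) k V) := ⟨Module.finBasisOfFinrankEq k V hV⟩
  obtain ⟨bA⟩ : Nonempty (Basis (Fin 5) k A) := ⟨Module.finBasisOfFinrankEq k A hA⟩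
  set M : A → Matrix (Fin 6) (Fin 6) k := fun a => Matrix.of (fun i j => f a (b i) (b j)) with hM
  -- first find a ≠ 0 with (M a).det = 0
  obtain ⟨a, ha, hdet⟩ : ∃ a : A, a ≠ 0 ∧ (M a).det = 0 := by
    set a₁ := bA 0 with ha₁
    set a₂ := bA 1 with ha₂
    by_cases h2 : (M a₂).det = 0
    · exact ⟨a₂, bA.ne_zero 1, h2⟩
    · set C0 : Matrix (Fin 6) (Fin 6) k := (M a₂)⁻¹ * (M a₁) with hC0
      have hdeg : (-C0).charpoly.degree ≠ 0 := by
        rw [Matrix.charpoly_degree_eq_dim]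
        simp
      obtain ⟨t₀, ht₀⟩ := IsAlgClosed.exists_root _ hdeg
      have heval : (Matrix.diagonal (fun _ => t₀) - (-C0)).det = 0 :=
        (charpoly_eval' (-C0) t₀).symm.trans ht₀
      refine ⟨a₁ + t₀ • a₂, ?_, ?_⟩
      · intro h
        have := congrArg (fun x => (bA.repr x) 0) h
        simp [ha₁, ha₂, Finsupp.single_apply] at this
      · have hMadd : M (a₁ + t₀ • a₂) = M a₁ + t₀ • M a₂ := by
          ext i j
          simp [hM, map_add, LinearMap.add_apply, LinearMap.smul_apply, _root_.map_smul,
            Matrix.add_apply, Matrix.smul_apply, smul_eq_mul]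
        have hdiag : (M a₂) * Matrix.diagonal (fun _ => t₀) = t₀ • M a₂ := by
          ext i j
          simp [Matrix.mul_diagonal, mul_comm]
        have hcancel : (M a₂) * ((M a₂)⁻¹ * (M a₁)) = M a₁ :=
          Matrix.mul_nonsing_inv_cancel_left _ _ (isUnit_iff_ne_zero.mpr h2)
        have hfact : M a₁ + t₀ • M a₂ = (M a₂) * (Matrix.diagonal (fun _ => t₀) - (-C0)) := by
          rw [sub_neg_eq_add, Matrix.mul_add, hdiag, hC0, hcancel, add_comm]
        rw [hMadd, hfact, Matrix.det_mul, heval, mul_zero]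
  -- now extract a radical vector
  obtain ⟨w, hw, hmul⟩ := (Matrix.exists_mulVec_eq_zero_iff.mpr hdet)
  set u : V := b.equivFun.symm w with hu
  have hune : u ≠ 0 := by
    intro h
    apply hw
    have h2 := congrArg b.equivFun h
    rwa [hu, LinearEquiv.apply_symm_apply, map_zero] at h2
  refine ⟨a, ha, u, hune, ?_⟩
  have hbase : ∀ i, f a (b i) u = 0 := by
    intro i
    have : (M a).mulVec w i = 0 := congrFun hmul i
    rw [Matrix.mulVec, dotProduct] at this
    rw [hu, Basis.equivFun_symm_apply, map_sum]
    simpa [hM, mul_comm, _root_.map_smul, smul_eq_mul] using this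
  have hflip : (f a).flip u = 0 := by
    apply b.ext
    intro i
    simp [LinearMap.flip_apply, hbase i]
  intro w'
  have h1 : f a w' u = 0 := by
    have := congrArg (fun g => g w') hflip
    simpa using this
  have h := halt a (u + w')
  simp only [map_add, LinearMap.add_apply, halt a u, halt a w'] at h
  linear_combination h - h1

end Aux

/-- For a regular `A`-net of alternating bilinear forms `f : A → ∧²(V^∨)` (with `dim A = 5`,
`dim V = 6`, `f` injective linear, and `rank f(a) ≥ 4` for all nonzero `a`), over an
algebraically closed field of characteristic zero, the following are equivalent for `v ∈ V`:
(i) `v` lies in the radical of some nonzero member of the net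
(the image `ψ(ℰ_f^∨)` of the kernel bundle over the Pfaffian cubic `Y_f`);
(ii) `v` lies in some 2-dimensional subspace `L ⊆ V` which is isotropic for all forms of the
net (the image `φ(𝒰_f)` of the tautological bundle over the Fano threefold `X_f`). -/
theorem pfaffian_grassmannian_images_eq
    (k : Type*) [Field k] [IsAlgClosed k] [CharZero k]
    (V : Type*) [AddCommGroup V] [Module k V] [FiniteDimensional k V]
    (A : Type*) [AddCommGroup A] [Module k A] [FiniteDimensional k A]
    (hV : Module.finrank k V = 6) (hA : Module.finrank k A = 5)
    (f : A →ₗ[k] V →ₗ[k] V →ₗ[k] k)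
    (hinj : Function.Injective f)
    (halt : ∀ (a : A) (v : V), f a v v = 0)
    (hreg : ∀ a : A, a ≠ 0 →
      4 ≤ Module.finrank k V - Module.finrank k (LinearMap.ker (f a)))
    (v : V) :
    (∃ a : A, a ≠ 0 ∧ ∀ w : V, f a v w = 0) ↔
      (∃ L : Submodule k V, Module.finrank k L = 2 ∧ v ∈ L ∧
        ∀ a : A, ∀ u ∈ L, ∀ w ∈ L, f a u w = 0) := by
  classical
  constructor
  · rintro ⟨a₀, ha₀, hrad⟩
    by_cases hv : v = 0
    · obtain ⟨a, ha, u, hu, hurad⟩ := exists_degenerate hV hA f halt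
      obtain ⟨L, hL2, huL, hiso⟩ := net_plane hV hA f halt u hu a ha hurad
      exact ⟨L, hL2, hv ▸ L.zero_mem, hiso⟩
    · exact net_plane hV hA f halt v hv a₀ ha₀ hrad
  · rintro ⟨L, hL2, hvL, hiso⟩
    set T : A →ₗ[k] (V →ₗ[k] k) := f.flip v with hT
    have hrange : LinearMap.range T ≤ L.dualAnnihilator := by
      rintro φ ⟨c, rfl⟩
      rw [Submodule.mem_dualAnnihilator]
      intro w hw
      exact hiso c v hvL w hw
    have hAnn : Module.finrank k L.dualAnnihilator = 4 := by
      have h1 : Module.finrank k (V ⧸ L) = Module.finrank k L.dualAnnihilator :=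
        LinearEquiv.finrank_eq (Subspace.quotEquivAnnihilator _)
      have h2 := Submodule.finrank_quotient_add_finrank L
      omega
    have hker : 0 < Module.finrank k (LinearMap.ker T) := by
      have h3 := LinearMap.finrank_range_add_finrank_ker T
      have h4 := Submodule.finrank_mono hrange
      rw [hAnn] at h4
      omega
    obtain ⟨x, hx⟩ := Module.finrank_pos_iff_exists_ne_zero.mp hker
    have hx1 : (x : A) ≠ 0 := fun h => hx (Subtype.ext h)
    refine ⟨x.1, hx1, ?_⟩
    intro w
    have h0 : T x.1 = 0 := x.2
    exact congrArg (fun g : V →ₗ[k] k => g w) h0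
end
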